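/- Let V be a congruence-modular variety of algebras, B ∈ V, and μ, α congruences on B. Then α laxly centralizes μ with respect to V if and only if the commutator [μ, α] = ⊥. -/

import Mathlib

/-!
Basic universal algebra: signatures, algebras, homomorphisms, congruences
(forming a complete lattice), generated congruences, images and preimages of
congruences, quotient algebras, subalgebras, products, ultraproducts,
varieties (classes closed under H, S, P), the term-condition commutator,
relatively free algebras, and lax centrality.
-/

universe u v

namespace UAlg

/-- A (finitary) signature: a type of operation symbols with arities. -/
structure Signature : Type (u + 1) where
  ops : Type u
  arity : ops → ℕ

/-- An algebra of signature `S`. -/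
structure Algebra (S : Signature.{u}) : Type (u + 1) where
  carrier : Type u
  interp : ∀ o : S.ops, (Fin (S.arity o) → carrier) → carrier

variable {S : Signature.{u}}

/-- A homomorphism of algebras. -/
structure Hom (A B : Algebra S) : Type u where
  toFun : A.carrier → B.carrier
  map_interp : ∀ (o : S.ops) (a : Fin (S.arity o) → A.carrier),
    toFun (A.interp o a) = B.interp o (fun i => toFun (a i))

/-- Composition of homomorphisms. -/
def Hom.comp {A B C : Algebra S} (g : Hom B C) (f : Hom A B) : Hom A C where
  toFun := g.toFun ∘ f.toFun
  map_interp o a := by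
    simp only [Function.comp, f.map_interp, g.map_interp]

/-- A congruence on an algebra: an equivalence relation compatible with the
operations. -/
structure Cong (A : Algebra S) : Type u where
  r : A.carrier → A.carrier → Prop
  iseqv : Equivalence r
  compat : ∀ (o : S.ops) (a b : Fin (S.arity o) → A.carrier),
    (∀ i, r (a i) (b i)) → r (A.interp o a) (A.interp o b)

namespace Cong

variable {A : Algebra S}

theorem ext {c d : Cong A} (h : ∀ x y, c.r x y ↔ d.r x y) : c = d := by
  cases c; cases d
  simp only [mk.injEq]
  funext x y
  exact propext (h x y)

instance : PartialOrder (Cong A) where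
  le c d := ∀ x y, c.r x y → d.r x y
  le_refl c := fun _ _ h => h
  le_trans a b c hab hbc := fun x y h => hbc x y (hab x y h)
  le_antisymm a b h1 h2 := ext fun x y => ⟨h1 x y, h2 x y⟩

instance : InfSet (Cong A) where
  sInf s :=
    { r := fun x y => ∀ c ∈ s, c.r x y
      iseqv :=
        ⟨fun x c _ => c.iseqv.refl x,
         fun h c hc => c.iseqv.symm (h c hc),
         fun h1 h2 c hc => c.iseqv.trans (h1 c hc) (h2 c hc)⟩
      compat := fun o a b h c hc => c.compat o a b fun i => h i c hc }

instance : CompleteLattice (Cong A) :=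
  completeLatticeOfInf _ (fun s =>
    ⟨fun c hc x y h => h c hc, fun _ hd x y h c hc => hd hc x y h⟩)

end Cong

/-- The congruence generated by a binary relation. -/
def conGen (A : Algebra S) (s : A.carrier → A.carrier → Prop) : Cong A :=
  sInf {c : Cong A | ∀ x y, s x y → c.r x y}

/-- The kernel congruence of a homomorphism. -/
def Hom.ker {A B : Algebra S} (f : Hom A B) : Cong A where
  r x y := f.toFun x = f.toFun y
  iseqv := ⟨fun _ => rfl, Eq.symm, Eq.trans⟩
  compat o a b h := by
    show f.toFun (A.interp o a) = f.toFun (A.interp o b)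
    rw [f.map_interp, f.map_interp]
    exact congrArg _ (funext h)

/-- `conMap f α` (written `→f α` in the paper) is the congruence of `B`
generated by the image `f(α)` of the congruence `α` of `A`. -/
def conMap {A B : Algebra S} (f : Hom A B) (α : Cong A) : Cong B :=
  conGen B (fun x y => ∃ a a', α.r a a' ∧ f.toFun a = x ∧ f.toFun a' = y)

/-- The inverse image `f⁻¹(β)` of a congruence. -/
def conComap {A B : Algebra S} (f : Hom A B) (β : Cong B) : Cong A where
  r x y := β.r (f.toFun x) (f.toFun y)
  iseqv :=
    ⟨fun _ => β.iseqv.refl _, fun h => β.iseqv.symm h,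
     fun h1 h2 => β.iseqv.trans h1 h2⟩
  compat o a b h := by
    show β.r (f.toFun (A.interp o a)) (f.toFun (A.interp o b))
    rw [f.map_interp, f.map_interp]
    exact β.compat o _ _ h

/-- The setoid underlying a congruence. -/
def Cong.toSetoid {A : Algebra S} (c : Cong A) : Setoid A.carrier :=
  ⟨c.r, c.iseqv⟩

/-- The quotient algebra of an algebra by a congruence. -/
noncomputable def quotAlg (A : Algebra S) (c : Cong A) : Algebra S where
  carrier := Quotient c.toSetoid
  interp o a := Quotient.mk c.toSetoid (A.interp o (fun i => (a i).out))

/-- The natural (quotient) homomorphism `A → A/c`. -/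
def natHom (A : Algebra S) (c : Cong A) : Hom A (quotAlg A c) where
  toFun := Quotient.mk c.toSetoid
  map_interp o a := by
    apply Quotient.sound
    apply c.compat
    intro i
    show c.r (a i) (Quotient.mk c.toSetoid (a i)).out
    exact Quotient.exact ((Quotient.out_eq (Quotient.mk c.toSetoid (a i))).symm)

/-- A subuniverse: a subset closed under the operations. -/
structure Subuniverse (A : Algebra S) : Type u where
  carrier : Set A.carrier
  closed : ∀ (o : S.ops) (a : Fin (S.arity o) → A.carrier),
    (∀ i, a i ∈ carrier) → A.interp o a ∈ carrier

/-- The subalgebra determined by a subuniverse. -/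
def Subuniverse.alg {A : Algebra S} (s : Subuniverse A) : Algebra S where
  carrier := {x // x ∈ s.carrier}
  interp o a := ⟨A.interp o (fun i => (a i).1), s.closed o _ (fun i => (a i).2)⟩

/-- The product of a family of algebras. -/
def prodAlg {ι : Type u} (A : ι → Algebra S) : Algebra S where
  carrier := ∀ i, (A i).carrier
  interp o a i := (A i).interp o (fun j => a j i)

/-- A variety: a class of algebras closed under homomorphic images,
subalgebras, and products. -/
structure IsVariety (V : Algebra S → Prop) : Prop where
  closed_hom : ∀ (A B : Algebra S) (f : Hom A B),
    Function.Surjective f.toFun → V A → V B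
  closed_sub : ∀ (A : Algebra S) (s : Subuniverse A), V A → V s.alg
  closed_prod : ∀ (ι : Type u) (A : ι → Algebra S), (∀ i, V (A i)) → V (prodAlg A)

/-- `α` laxly centralizes `μ` with respect to the class `V`. -/
def LaxCentralizes (V : Algebra S → Prop) (B : Algebra S) (μ α : Cong B) : Prop :=
  ∃ C : Algebra S, V C ∧ ∃ (π : Hom C B) (β γ : Cong C),
    Function.Surjective π.toFun ∧ μ ≤ conMap π β ∧ α ≤ conMap π γ ∧ β ⊓ γ = ⊥

/-- `B` is a homomorphic image of a member of `K`. -/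
def InH (K : Algebra S → Prop) (B : Algebra S) : Prop :=
  ∃ A, K A ∧ ∃ f : Hom A B, Function.Surjective f.toFun

/-- `B` embeds into a product of members of `K`, i.e. `B ∈ SP(K)`. -/
def InSP (K : Algebra S → Prop) (B : Algebra S) : Prop :=
  ∃ (ι : Type u) (A : ι → Algebra S), (∀ i, K (A i)) ∧
    ∃ f : Hom B (prodAlg A), Function.Injective f.toFun

/-- `B ∈ HSP(K)`: `B` is a homomorphic image of an algebra embeddable in a
product of members of `K`. -/
def InHSP (K : Algebra S → Prop) (B : Algebra S) : Prop :=
  ∃ C : Algebra S, InSP K C ∧ ∃ f : Hom C B, Function.Surjective f.toFun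

/-- The congruence on a product given by an ultrafilter on the index set. -/
def ultraCong {ι : Type u} (A : ι → Algebra S) (U : Ultrafilter ι) :
    Cong (prodAlg A) where
  r x y := {i | x i = y i} ∈ U
  iseqv := by
    refine ⟨fun x => ?_, fun {x y} h => ?_, fun {x y z} h1 h2 => ?_⟩
    · have : {i | x i = x i} = Set.univ := by ext i; simp
      rw [this]; exact Filter.univ_mem
    · have : {i | y i = x i} = {i | x i = y i} := by ext i; exact eq_comm
      rw [this]; exact h
    · refine Filter.mem_of_superset (Filter.inter_mem h1 h2) ?_
      intro i hi
      exact hi.1.trans hi.2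
  compat o a b h := by
    have h1 : (⋂ j, {i | a j i = b j i}) ∈ (U : Filter ι) :=
      (Filter.iInter_mem).2 h
    refine Filter.mem_of_superset h1 ?_
    intro i hi
    simp only [Set.mem_iInter, Set.mem_setOf_eq] at hi
    show (A i).interp o (fun j => a j i) = (A i).interp o (fun j => b j i)
    exact congrArg _ (funext hi)

/-- `B ∈ HSP_u(K)`: `B` is a homomorphic image of an algebra embeddable in an
ultraproduct of members of `K`. -/
def InHSPu (K : Algebra S → Prop) (B : Algebra S) : Prop :=
  ∃ (ι : Type u) (A : ι → Algebra S) (U : Ultrafilter ι), (∀ i, K (A i)) ∧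
    ∃ C : Algebra S,
      (∃ g : Hom C (quotAlg (prodAlg A) (ultraCong A U)),
        Function.Injective g.toFun) ∧
      ∃ f : Hom C B, Function.Surjective f.toFun

/-- `μ` is the monolith of `B`: the minimum nontrivial congruence.
In particular its existence means `B` is subdirectly irreducible. -/
def IsMonolith (B : Algebra S) (μ : Cong B) : Prop :=
  μ ≠ ⊥ ∧ ∀ θ : Cong B, θ ≠ ⊥ → μ ≤ θ

/-- Terms of signature `S` over a set `X` of variables. -/
inductive Tm (S : Signature.{u}) (X : Type v) : Type max u v where
  | var : X → Tm S X
  | app : (o : S.ops) → (Fin (S.arity o) → Tm S X) → Tm S X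

/-- Evaluation of a term in an algebra under an assignment of the variables. -/
def Tm.eval {X : Type v} (A : Algebra S) (v : X → A.carrier) :
    Tm S X → A.carrier
  | .var x => v x
  | .app o t => A.interp o (fun i => Tm.eval A v (t i))

/-- The (term-condition) centralizing relation `C(α, β; δ)`. -/
def Centralizes {A : Algebra S} (α β δ : Cong A) : Prop :=
  ∀ (n : ℕ) (t : Tm S (Unit ⊕ Fin n)) (a b : A.carrier)
    (c d : Fin n → A.carrier),
    α.r a b → (∀ i, β.r (c i) (d i)) →
    δ.r (t.eval A (Sum.elim (fun _ => a) c)) (t.eval A (Sum.elim (fun _ => a) d)) →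
    δ.r (t.eval A (Sum.elim (fun _ => b) c)) (t.eval A (Sum.elim (fun _ => b) d))

/-- The commutator `[α, β]`: the least congruence `δ` such that `α`
centralizes `β` modulo `δ` (the Freese–McKenzie commutator, which is the
modular commutator in congruence-modular varieties). -/
def commutator {A : Algebra S} (α β : Cong A) : Cong A :=
  sInf {δ : Cong A | Centralizes α β δ}

/-- The term algebra over a set of variables. -/
def termAlg (S : Signature.{u}) (X : Type u) : Algebra S :=
  ⟨Tm S X, Tm.app⟩

/-- The congruence of `V`-equations on the term algebra: two terms are related
iff they evaluate the same way in every member of `V`. -/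
def eqThy (V : Algebra S → Prop) (X : Type u) : Cong (termAlg S X) where
  r s t := ∀ A : Algebra S, V A → ∀ v : X → A.carrier, s.eval A v = t.eval A v
  iseqv :=
    ⟨fun _ _ _ _ => rfl, fun h A hA v => (h A hA v).symm,
     fun h1 h2 A hA v => (h1 A hA v).trans (h2 A hA v)⟩
  compat o a b h A hA v := by
    show Tm.eval A v (Tm.app o a) = Tm.eval A v (Tm.app o b)
    simp only [Tm.eval]
    exact congrArg _ (funext fun i => h i A hA v)

/-- The relatively free algebra of `V` on the set `X` of generators. -/
noncomputable def freeAlg (V : Algebra S → Prop) (X : Type u) : Algebra S :=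
  quotAlg (termAlg S X) (eqThy V X)

/-- The canonical generators of the relatively free algebra. -/
def freeGen (V : Algebra S → Prop) (X : Type u) (x : X) :
    (freeAlg V X).carrier :=
  Quotient.mk (eqThy V X).toSetoid (Tm.var x)

/-- The homomorphism from the relatively free algebra of `V` to an algebra
`B ∈ V` induced by an assignment of the generators. -/
def evalFreeHom (V : Algebra S → Prop) (X : Type u) (B : Algebra S)
    (hB : V B) (v : X → B.carrier) : Hom (freeAlg V X) B where
  toFun := Quotient.lift (fun t : Tm S X => t.eval B v) (fun s t h => h B hB v)
  map_interp o a := by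
    show Tm.eval B v (Tm.app o (fun i => (a i).out)) = _
    simp only [Tm.eval]
    congr 1
    funext i
    conv_rhs => rw [← Quotient.out_eq (a i)]
    rfl

/-!
Write `A(ρ)` for the algebra of `ρ`-related pairs; it lies in `V` together with `A`.

Let `π : C → B` with kernel `κ` witness lax centrality, so `β ⊓ γ = ⊥`. The pairs
`(t(a, c), t(b, c))` and `(t(a, d), t(b, d))` of `C(β)` are related by the join of the
coordinatewise congruences of `γ` and `κ`; the modular law in `C(β)` and Gumm's shifting lemma in
`C` turn `κ` on first coordinates into `κ` on second coordinates, which is `C(β, γ ⊔ κ; κ)`.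
Since `C(X, Y; δ)` says that `X` lies below a congruence, this extends to
`C(β ⊔ κ, γ ⊔ κ; κ)`, which descends along `π` to `C(μ, α; ⊥)`.

Conversely, `C(μ, α; ⊥)` says that the congruence of `B(α)` generated by the `μ`-related
diagonal pairs never moves a diagonal pair off the diagonal. The shifting lemma in `B(α)` makes it
meet the kernel of the second projection trivially, and the first projection `B(α) → B` witnesses
lax centrality.
-/

namespace Cong

variable {A : Algebra S}

theorem refl (c : Cong A) (x : A.carrier) : c.r x x := c.iseqv.refl x

theorem symm (c : Cong A) {x y : A.carrier} (h : c.r x y) : c.r y x := c.iseqv.symm h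

theorem trans (c : Cong A) {x y z : A.carrier} (h : c.r x y) (h' : c.r y z) : c.r x z :=
  c.iseqv.trans h h'

theorem r_of_le {c d : Cong A} (h : c ≤ d) {x y : A.carrier} (hxy : c.r x y) : d.r x y :=
  h x y hxy

theorem inf_r {c d : Cong A} {x y : A.carrier} : (c ⊓ d).r x y ↔ c.r x y ∧ d.r x y := by
  rw [← sInf_pair]
  exact ⟨fun h => ⟨h c (by simp), h d (by simp)⟩, fun ⟨hc, hd⟩ e he => by
    rcases he with rfl | rfl <;> assumption⟩

theorem bot_r {x y : A.carrier} : (⊥ : Cong A).r x y ↔ x = y := by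
  rw [← sInf_univ]
  exact ⟨fun h => h (Hom.ker ⟨id, fun _ _ => rfl⟩) trivial,
    by rintro rfl; exact fun c _ => c.refl x⟩

theorem eval_r (c : Cong A) {X : Type v} (t : Tm S X) {v w : X → A.carrier}
    (h : ∀ x, c.r (v x) (w x)) : c.r (t.eval A v) (t.eval A w) := by
  induction t with
  | var x => exact h x
  | app o a ih => exact c.compat o _ _ ih

def ofUpdate (r : A.carrier → A.carrier → Prop) (hr : Equivalence r)
    (hstep : ∀ (o : S.ops) (f : Fin (S.arity o) → A.carrier) (i : Fin (S.arity o))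
      (x y : A.carrier), r x y →
        r (A.interp o (Function.update f i x)) (A.interp o (Function.update f i y))) :
    Cong A where
  r := r
  iseqv := hr
  compat o a b h := by
    classical
    suffices ∀ s : Finset (Fin (S.arity o)), r (A.interp o a) (A.interp o (s.piecewise b a)) by
      simpa using this Finset.univ
    intro s
    induction s using Finset.induction_on with
    | empty => simpa using hr.refl _
    | insert i s hi ih =>
      have hstep_i := hstep o (s.piecewise b a) i (a i) (b i) (h i)
      rw [← Finset.piecewise_eq_of_notMem s b a hi, Function.update_eq_self] at hstep_i
      rw [Finset.piecewise_insert]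
      exact hr.trans ih hstep_i

end Cong

theorem Hom.eval_comm {A B : Algebra S} (f : Hom A B) {X : Type v} (t : Tm S X)
    (v : X → A.carrier) : f.toFun (t.eval A v) = t.eval B (f.toFun ∘ v) := by
  induction t with
  | var x => rfl
  | app o a ih =>
    show f.toFun (A.interp o _) = B.interp o _
    rw [f.map_interp]
    exact congrArg _ (funext ih)

theorem Hom.eval_elim {A B : Algebra S} (f : Hom A B) {X Y : Type v} (t : Tm S (X ⊕ Y))
    (v : X → A.carrier) (w : Y → A.carrier) :
    f.toFun (t.eval A (Sum.elim v w)) = t.eval B (Sum.elim (f.toFun ∘ v) (f.toFun ∘ w)) := by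
  rw [f.eval_comm, Sum.comp_elim]

def Tm.subst {X Y : Type v} (σ : X → Tm S Y) : Tm S X → Tm S Y
  | .var x => σ x
  | .app o a => .app o fun i => (a i).subst σ

theorem Tm.eval_subst {X Y : Type v} (A : Algebra S) (σ : X → Tm S Y) (v : Y → A.carrier)
    (t : Tm S X) : (t.subst σ).eval A v = t.eval A fun x => (σ x).eval A v := by
  induction t with
  | var x => rfl
  | app o a ih => exact congrArg (A.interp o) (funext ih)

theorem conGen_le {A : Algebra S} {s : A.carrier → A.carrier → Prop} {c : Cong A}
    (h : ∀ x y, s x y → c.r x y) : conGen A s ≤ c :=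
  sInf_le h

theorem conMap_le_iff {A B : Algebra S} (f : Hom A B) (θ : Cong A) (c : Cong B) :
    conMap f θ ≤ c ↔ θ ≤ conComap f c := by
  refine ⟨fun h x y hxy => h _ _ fun d hd => hd _ _ ⟨x, y, hxy, rfl, rfl⟩,
    fun h => conGen_le ?_⟩
  rintro _ _ ⟨x, y, hxy, rfl, rfl⟩
  exact h x y hxy

theorem conMap_r_of_r {A B : Algebra S} (f : Hom A B) {θ : Cong A} {x y : A.carrier}
    (h : θ.r x y) : (conMap f θ).r (f.toFun x) (f.toFun y) :=
  (conMap_le_iff f θ _).mp le_rfl x y h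

theorem conComap_mono {A B : Algebra S} (f : Hom A B) {c d : Cong B} (h : c ≤ d) :
    conComap f c ≤ conComap f d :=
  fun _ _ hxy => h _ _ hxy

def conImage {A B : Algebra S} (f : Hom A B) (hf : Function.Surjective f.toFun)
    (c : Cong A) (hker : f.ker ≤ c) : Cong B where
  r x y := ∃ u v, c.r u v ∧ f.toFun u = x ∧ f.toFun v = y
  iseqv := by
    refine ⟨fun x => ?_, ?_, ?_⟩
    · obtain ⟨u, rfl⟩ := hf x
      exact ⟨u, u, c.refl u, rfl, rfl⟩
    · rintro x y ⟨u, v, h, rfl, rfl⟩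
      exact ⟨v, u, c.symm h, rfl, rfl⟩
    · rintro x y z ⟨u, v, h, rfl, hv⟩ ⟨u', v', h', hu', rfl⟩
      exact ⟨u, v', c.trans h (c.trans (hker v u' (hv.trans hu'.symm)) h'), rfl, rfl⟩
  compat o a b h := by
    choose u v huv hu hv using h
    refine ⟨A.interp o u, A.interp o v, c.compat o u v huv, ?_, ?_⟩ <;>
      rw [f.map_interp] <;> exact congrArg _ (funext ‹_›)

theorem conComap_conMap_le {A B : Algebra S} (f : Hom A B)
    (hf : Function.Surjective f.toFun) (θ : Cong A) :
    conComap f (conMap f θ) ≤ θ ⊔ f.ker := by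
  have hmap : conMap f θ ≤ conImage f hf (θ ⊔ f.ker) le_sup_right := by
    rw [conMap_le_iff]
    exact fun x y hxy => ⟨x, y, Cong.r_of_le le_sup_left hxy, rfl, rfl⟩
  rintro x y hxy
  obtain ⟨u, v, huv, hu, hv⟩ := hmap _ _ hxy
  have hker : ∀ {p q}, f.toFun p = f.toFun q → (θ ⊔ f.ker).r p q :=
    fun h => Cong.r_of_le le_sup_right h
  exact (θ ⊔ f.ker).trans (hker hu.symm) ((θ ⊔ f.ker).trans huv (hker hv))

/-- Gumm's shifting lemma. -/
theorem shifting {A : Algebra S} [IsModularLattice (Cong A)]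
    {vert horiz d : Cong A} (hd : d ≤ horiz) {p q p' q' : A.carrier}
    (hpq : vert.r p q) (hpq' : vert.r p' q') (hq : horiz.r q q') (hp : d.r p p') :
    (d ⊔ vert ⊓ horiz).r q q' := by
  have hjoin : (d ⊔ vert).r q q' :=
    (d ⊔ vert).trans (Cong.r_of_le le_sup_right (vert.symm hpq))
      ((d ⊔ vert).trans (Cong.r_of_le le_sup_left hp) (Cong.r_of_le le_sup_right hpq'))
  rw [← sup_inf_assoc_of_le vert hd]
  exact Cong.inf_r.mpr ⟨hjoin, hq⟩

section PairAlgebra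

variable {A : Algebra S} (ρ : Cong A)

def pairSub : Subuniverse (prodAlg fun _ : ULift.{u} Bool => A) where
  carrier := {x | ρ.r (x (ULift.up false)) (x (ULift.up true))}
  closed o _ h := ρ.compat o _ _ h

def pairAlg : Algebra S := (pairSub ρ).alg

theorem IsVariety.pairAlg_mem {V : Algebra S → Prop} (hV : IsVariety V) (hA : V A) :
    V (pairAlg ρ) :=
  hV.closed_sub _ _ (hV.closed_prod _ _ fun _ => hA)

def pairFst : Hom (pairAlg ρ) A := ⟨fun z => z.1 (ULift.up false), fun _ _ => rfl⟩

def pairSnd : Hom (pairAlg ρ) A := ⟨fun z => z.1 (ULift.up true), fun _ _ => rfl⟩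

def pairDiag : Hom A (pairAlg ρ) := ⟨fun x => ⟨fun _ => x, ρ.refl x⟩, fun _ _ => rfl⟩

def pairCong (θ : Cong A) : Cong (pairAlg ρ) :=
  conComap (pairFst ρ) θ ⊓ conComap (pairSnd ρ) θ

variable {ρ}

def mkPair (x y : A.carrier) (h : ρ.r x y) : (pairAlg ρ).carrier :=
  ⟨fun i => bif i.down then y else x, h⟩

theorem pair_mem (z : (pairAlg ρ).carrier) : ρ.r ((pairFst ρ).toFun z) ((pairSnd ρ).toFun z) :=
  z.2

theorem pair_ext {z w : (pairAlg ρ).carrier} (h₁ : (pairFst ρ).toFun z = (pairFst ρ).toFun w)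
    (h₂ : (pairSnd ρ).toFun z = (pairSnd ρ).toFun w) : z = w := by
  refine Subtype.ext (funext fun ⟨i⟩ => ?_)
  cases i
  exacts [h₁, h₂]

theorem exists_eq_mkPair (z : (pairAlg ρ).carrier) : ∃ x y h, z = mkPair (ρ := ρ) x y h :=
  ⟨_, _, pair_mem z, pair_ext rfl rfl⟩

end PairAlgebra

/-- The largest congruence saturating `U`: `z` and `w` are related iff no unary polynomial
separates them with respect to membership in `U`. -/
def syntacticCong (A : Algebra S) (U : Set A.carrier) : Cong A :=
  Cong.ofUpdate
    (fun z w => ∀ (k : ℕ) (t : Tm S (Unit ⊕ Fin k)) (e : Fin k → A.carrier),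
      t.eval A (Sum.elim (fun _ => z) e) ∈ U ↔ t.eval A (Sum.elim (fun _ => w) e) ∈ U)
    ⟨fun _ _ _ _ => Iff.rfl, fun h k t e => (h k t e).symm,
      fun h h' k t e => (h k t e).trans (h' k t e)⟩
    (by
      intro o f i x y hxy k t e
      -- `z ↦ t(o(f[i ↦ z]), e)` is the polynomial `z ↦ t[σ](z, e ++ f)`
      let σ : Unit ⊕ Fin k → Tm S (Unit ⊕ Fin (k + S.arity o)) :=
        Sum.elim
          (fun _ => .app o
            (Function.update (fun j => .var (.inr (Fin.natAdd k j))) i (.var (.inl ()))))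
          (fun m => .var (.inr (Fin.castAdd _ m)))
      have hσ : ∀ z, (t.subst σ).eval A (Sum.elim (fun _ => z) (Fin.append e f))
          = t.eval A (Sum.elim (fun _ => A.interp o (Function.update f i z)) e) := by
        intro z
        rw [Tm.eval_subst]
        congr 1
        funext v
        rcases v with _ | m
        · show A.interp o (Tm.eval A _ ∘ Function.update _ i _) = _
          rw [Function.comp_update]
          congr 2
          funext j
          exact Fin.append_right e f j
        · exact Fin.append_left e f m
      simpa only [hσ] using hxy _ (t.subst σ) (Fin.append e f))

theorem syntacticCong.mem_iff {A : Algebra S} {U : Set A.carrier} {z w : A.carrier}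
    (h : (syntacticCong A U).r z w) : z ∈ U ↔ w ∈ U :=
  h 0 (.var (.inl ())) Fin.elim0

/-- The largest `X` with `C(X, Y; δ)`: polynomials of `A(Y)` evaluated at diagonal points
compute both sides of the term condition at once. -/
def centralizer {A : Algebra S} (Y δ : Cong A) : Cong A :=
  conComap (pairDiag Y)
    (syntacticCong (pairAlg Y) {z | δ.r ((pairFst Y).toFun z) ((pairSnd Y).toFun z)})

theorem centralizes_iff_le_centralizer {A : Algebra S} {X Y δ : Cong A} :
    Centralizes X Y δ ↔ X ≤ centralizer Y δ := by
  constructor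
  · intro h x y hxy k t e
    simp only [Set.mem_ofPred_eq, Hom.eval_elim]
    exact ⟨h k t x y _ _ hxy fun i => pair_mem (e i),
      h k t y x _ _ (X.symm hxy) fun i => pair_mem (e i)⟩
  · intro h k t a b c d hab hcd
    have hpoly := h a b hab k t fun i => mkPair (c i) (d i) (hcd i)
    simp only [Set.mem_ofPred_eq, Hom.eval_elim] at hpoly
    exact hpoly.mp

theorem centralizes_self_left {A : Algebra S} (Y δ : Cong A) : Centralizes δ Y δ := by
  intro n t a b c d hab _ hyp
  have hswap : ∀ {x y : A.carrier} (E : Fin n → A.carrier), δ.r x y →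
      δ.r (t.eval A (Sum.elim (fun _ => x) E)) (t.eval A (Sum.elim (fun _ => y) E)) :=
    fun E hxy => δ.eval_r t (by rintro (_ | i); exacts [hxy, δ.refl _])
  exact δ.trans (hswap c (δ.symm hab)) (δ.trans hyp (hswap d hab))

theorem centralizes_sup_left {A : Algebra S} {X X' Y δ : Cong A} (h : Centralizes X Y δ)
    (h' : Centralizes X' Y δ) : Centralizes (X ⊔ X') Y δ :=
  centralizes_iff_le_centralizer.mpr
    (sup_le (centralizes_iff_le_centralizer.mp h) (centralizes_iff_le_centralizer.mp h'))

theorem centralizes_commutator {A : Algebra S} (μ α : Cong A) :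
    Centralizes μ α (commutator μ α) :=
  fun n t a b c d hab hcd hyp δ hδ => hδ n t a b c d hab hcd (hyp δ hδ)

theorem commutator_eq_bot_iff {A : Algebra S} (μ α : Cong A) :
    commutator μ α = ⊥ ↔ Centralizes μ α ⊥ :=
  ⟨fun h => h ▸ centralizes_commutator μ α, fun h => eq_bot_iff.mpr (sInf_le h)⟩

section

variable {C : Algebra S} {β : Cong C}

theorem pairCong_inf_fst_le_snd [IsModularLattice (Cong C)] {γ : Cong C} (hβγ : β ⊓ γ = ⊥)
    (κ : Cong C) : pairCong β γ ⊓ conComap (pairFst β) κ ≤ conComap (pairSnd β) κ := by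
  intro z w h
  obtain ⟨hγ, hκ⟩ := Cong.inf_r.mp h
  obtain ⟨hγ₁, hγ₂⟩ := Cong.inf_r.mp hγ
  have hshift := shifting (d := κ ⊓ γ) inf_le_right (pair_mem z) (pair_mem w) hγ₂
    (Cong.inf_r.mpr ⟨hκ, hγ₁⟩)
  rw [hβγ, sup_bot_eq] at hshift
  exact Cong.r_of_le (inf_le_left : κ ⊓ γ ≤ κ) hshift

theorem sup_pairCong_inf_fst_le_snd [IsModularLattice (Cong C)]
    [IsModularLattice (Cong (pairAlg β))] {γ : Cong C} (hβγ : β ⊓ γ = ⊥) (κ : Cong C) :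
    (pairCong β γ ⊔ pairCong β κ) ⊓ conComap (pairFst β) κ ≤
      conComap (pairSnd β) κ := by
  have hκ : pairCong β κ ≤ conComap (pairFst β) κ := inf_le_left
  rw [sup_comm, sup_inf_assoc_of_le _ hκ]
  exact sup_le inf_le_right (pairCong_inf_fst_le_snd hβγ κ)

theorem centralizes_sup_of_inf_eq_bot [IsModularLattice (Cong C)]
    [IsModularLattice (Cong (pairAlg β))] {γ : Cong C} (hβγ : β ⊓ γ = ⊥) (κ : Cong C) :
    Centralizes β (γ ⊔ κ) κ := by
  intro n t a b c d hab hcd hyp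
  let P : (Fin n → C.carrier) → (pairAlg β).carrier := fun E =>
    t.eval _ (Sum.elim (fun _ => mkPair a b hab) ((pairDiag β).toFun ∘ E))
  have hdiag : γ ⊔ κ ≤ conComap (pairDiag β) (pairCong β γ ⊔ pairCong β κ) :=
    sup_le (fun x y h => Cong.r_of_le le_sup_left (Cong.inf_r.mpr ⟨h, h⟩))
      (fun x y h => Cong.r_of_le le_sup_right (Cong.inf_r.mpr ⟨h, h⟩))
  have hP : (pairCong β γ ⊔ pairCong β κ).r (P c) (P d) :=
    Cong.eval_r _ t (by rintro (_ | i); exacts [Cong.refl _ _, hdiag _ _ (hcd i)])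
  have hfst : κ.r ((pairFst β).toFun (P c)) ((pairFst β).toFun (P d)) := by
    simp only [P, Hom.eval_elim]
    exact hyp
  have hsnd := sup_pairCong_inf_fst_le_snd hβγ κ _ _ (Cong.inf_r.mpr ⟨hP, hfst⟩)
  simp only [P, conComap, Hom.eval_elim] at hsnd
  exact hsnd

end

theorem Centralizes.bot_of_surjective {C B : Algebra S} {π : Hom C B}
    (hπ : Function.Surjective π.toFun) {X Y : Cong C} {μ α : Cong B}
    (h : Centralizes X Y π.ker) (hμ : conComap π μ ≤ X) (hα : conComap π α ≤ Y) :
    Centralizes μ α ⊥ := by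
  intro n t a b c d hab hcd hyp
  choose l hl using hπ
  have hlift : ∀ (x : B.carrier) (E : Fin n → B.carrier),
      π.toFun (t.eval C (Sum.elim (fun _ => l x) (l ∘ E))) =
        t.eval B (Sum.elim (fun _ => x) E) := by
    intro x E
    rw [π.eval_elim]
    congr 2 <;> funext _ <;> exact hl _
  have hlab : X.r (l a) (l b) := hμ _ _ (by simpa only [conComap, hl] using hab)
  have hlcd : ∀ i, Y.r ((l ∘ c) i) ((l ∘ d) i) := fun i =>
    hα _ _ (by simpa only [conComap, Function.comp_apply, hl] using hcd i)
  have hlyp : π.ker.r (t.eval C (Sum.elim (fun _ => l a) (l ∘ c)))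
      (t.eval C (Sum.elim (fun _ => l a) (l ∘ d))) := by
    show π.toFun _ = π.toFun _
    rw [hlift, hlift]
    exact Cong.bot_r.mp hyp
  have hres : π.toFun _ = π.toFun _ := h n t _ _ _ _ hlab hlcd hlyp
  rw [hlift, hlift] at hres
  exact Cong.bot_r.mpr hres

theorem conMap_pairDiag_inf_ker_pairSnd_eq_bot {B : Algebra S} {μ α : Cong B}
    [IsModularLattice (Cong (pairAlg α))] (h : Centralizes μ α ⊥) :
    conMap (pairDiag α) μ ⊓ (pairSnd α).ker = ⊥ := by
  have hsat : conMap (pairDiag α) μ ≤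
      syntacticCong (pairAlg α)
        {z | (⊥ : Cong B).r ((pairFst α).toFun z) ((pairSnd α).toFun z)} :=
    (conMap_le_iff _ _ _).mpr (centralizes_iff_le_centralizer.mp h)
  have hker : (pairFst α).ker ⊓ (pairSnd α).ker = ⊥ := eq_bot_iff.mpr fun z w h =>
    Cong.bot_r.mpr (pair_ext (Cong.inf_r.mp h).1 (Cong.inf_r.mp h).2)
  refine eq_bot_iff.mpr fun z w hzw => Cong.bot_r.mpr ?_
  obtain ⟨z₁, z₂, hz, rfl⟩ := exists_eq_mkPair z
  obtain ⟨w₁, w₂, hw, rfl⟩ := exists_eq_mkPair w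
  have h₂ : z₂ = w₂ := (Cong.inf_r.mp hzw).2
  subst h₂
  have hshift := shifting inf_le_right (vert := (pairFst α).ker) (p := mkPair z₁ z₂ hz)
    (q := (pairDiag α).toFun z₁) (p' := mkPair w₁ z₂ hw)
    (q' := mkPair w₁ z₁ (α.trans hw (α.symm hz))) rfl rfl rfl hzw
  rw [hker, sup_bot_eq] at hshift
  have hdiag := syntacticCong.mem_iff (hsat _ _ (Cong.r_of_le inf_le_left hshift))
  have h₁ : w₁ = z₁ := Cong.bot_r.mp (hdiag.mp (Cong.bot_r.mpr rfl))
  subst h₁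
  rfl

theorem laxCentralizes_of_centralizes_bot {V : Algebra S → Prop} (hV : IsVariety V)
    {B : Algebra S} (hB : V B) {μ α : Cong B} [IsModularLattice (Cong (pairAlg α))]
    (h : Centralizes μ α ⊥) : LaxCentralizes V B μ α :=
  ⟨pairAlg α, hV.pairAlg_mem α hB, pairFst α, conMap (pairDiag α) μ, (pairSnd α).ker,
    fun x => ⟨(pairDiag α).toFun x, rfl⟩,
    fun _ _ hxy => conMap_r_of_r (pairFst α) (conMap_r_of_r (pairDiag α) hxy),
    fun x y hxy =>
      conMap_r_of_r (pairFst α) (x := mkPair x y hxy) (y := (pairDiag α).toFun y) rfl,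
    conMap_pairDiag_inf_ker_pairSnd_eq_bot h⟩

/-- In a congruence-modular variety `V`, `α` laxly centralizes
`μ` iff the commutator `[μ, α]` is trivial. -/
theorem laxCentralizes_iff_commutator_eq_bot {V : Algebra S → Prop}
    (hV : IsVariety V)
    (hmod : ∀ A : Algebra S, V A → IsModularLattice (Cong A))
    {B : Algebra S} (hB : V B) (μ α : Cong B) :
    LaxCentralizes V B μ α ↔ commutator μ α = ⊥ := by
  rw [commutator_eq_bot_iff]
  constructor
  · rintro ⟨C, hC, π, β, γ, hπ, hμ, hα, hβγ⟩
    have := hmod C hC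
    have := hmod _ (hV.pairAlg_mem β hC)
    exact Centralizes.bot_of_surjective hπ
      (centralizes_sup_left (centralizes_sup_of_inf_eq_bot hβγ π.ker)
        (centralizes_self_left _ _))
      ((conComap_mono π hμ).trans (conComap_conMap_le π hπ β))
      ((conComap_mono π hα).trans (conComap_conMap_le π hπ γ))
  · have := hmod _ (hV.pairAlg_mem α hB)
    exact laxCentralizes_of_centralizes_bot hV hB

end UAlg
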